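/- arXiv:2512.07647 — 7 statements merged into one kernel-verified Lean document; each statement's English description precedes it below -/
import Mathlib

section
/- Deterministic gap bound: for scores s_1 ≥ ... ≥ s_n and 1 ≤ k < n, with boundary gap Δ_k = s_k − s_{k+1}, the total-variation error of Top-k truncation satisfies TV(P, P̂) ≤ (n−k) e^{s_{k+1}} / ( k e^{s_k} + (n−k) e^{s_{k+1}} ) = 1 / ( 1 + (k/(n−k)) e^{Δ_k} ). -/
/-- **Deterministic gap bound.** For scores `s 0 ≥ ... ≥ s (n-1)` and `1 ≤ k < n`,
with boundary scores `s_k = s ⟨k-1⟩` and `s_{k+1} = s ⟨k⟩` (1-indexed in the paper)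
and gap `Δ_k = s_k - s_{k+1}`,
`TV(P,P̂) ≤ (n-k) e^{s_{k+1}} / (k e^{s_k} + (n-k) e^{s_{k+1}})
          = 1 / (1 + (k/(n-k)) e^{Δ_k})`. -/
theorem tv_gap_bound (n k : ℕ) (hk : 1 ≤ k) (hkn : k < n)
    (s : Fin n → ℝ) (hs : ∀ i j : Fin n, i ≤ j → s j ≤ s i)
    (p phat : Fin n → ℝ)
    (hp : ∀ i, p i = Real.exp (s i) / ∑ j, Real.exp (s j))
    (hphat : ∀ i : Fin n, phat i =
      if (i : ℕ) < k then
        Real.exp (s i) /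
          ∑ j ∈ Finset.univ.filter (fun j : Fin n => (j : ℕ) < k), Real.exp (s j)
      else 0) :
    (1 / 2) * ∑ i, |p i - phat i|
      ≤ ((n : ℝ) - k) * Real.exp (s ⟨k, hkn⟩) /
          ((k : ℝ) * Real.exp (s ⟨k - 1, by omega⟩)
            + ((n : ℝ) - k) * Real.exp (s ⟨k, hkn⟩)) ∧
    ((n : ℝ) - k) * Real.exp (s ⟨k, hkn⟩) /
        ((k : ℝ) * Real.exp (s ⟨k - 1, by omega⟩)
          + ((n : ℝ) - k) * Real.exp (s ⟨k, hkn⟩))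
      = 1 / (1 + ((k : ℝ) / ((n : ℝ) - k)) *
          Real.exp (s ⟨k - 1, by omega⟩ - s ⟨k, hkn⟩)) := by
  set a := s ⟨k - 1, by omega⟩ with ha
  set b := s ⟨k, hkn⟩ with hb
  set T : Finset (Fin n) := Finset.univ.filter (fun j : Fin n => (j : ℕ) < k) with hT
  have hTIio : T = Finset.Iio ⟨k, hkn⟩ := by
    ext j; simp [hT, Fin.lt_def]
  have hTcard : T.card = k := by rw [hTIio, Fin.card_Iio]
  have hTccard : Tᶜ.card = n - k := by
    have := Finset.card_compl T
    simp [hTcard] at this; simpa using this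
  set A := ∑ j ∈ T, Real.exp (s j) with hA
  set B := ∑ j ∈ Tᶜ, Real.exp (s j) with hB
  have hApos : 0 < A := by
    apply Finset.sum_pos (fun i _ => Real.exp_pos _)
    refine ⟨⟨0, by omega⟩, ?_⟩
    simp [hT]; omega
  have hBpos : 0 < B := by
    apply Finset.sum_pos (fun i _ => Real.exp_pos _)
    refine ⟨⟨k, hkn⟩, ?_⟩
    simp [hT]
  have hS : ∑ j, Real.exp (s j) = A + B := by
    rw [hA, hB, ← Finset.sum_add_sum_compl T]
  have hSpos : 0 < A + B := by linarith
  -- lower bound A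
  have hAge : (k : ℝ) * Real.exp a ≤ A := by
    calc (k : ℝ) * Real.exp a = ∑ _j ∈ T, Real.exp a := by
          rw [Finset.sum_const, hTcard, nsmul_eq_mul]
      _ ≤ A := by
          apply Finset.sum_le_sum
          intro j hj
          apply Real.exp_le_exp.mpr
          apply hs
          have : (j : ℕ) < k := by simpa [hT] using hj
          simp [Fin.le_def]; omega
  have hBle : B ≤ ((n : ℝ) - k) * Real.exp b := by
    calc B ≤ ∑ _j ∈ Tᶜ, Real.exp b := by
          apply Finset.sum_le_sum
          intro j hj
          apply Real.exp_le_exp.mpr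
          apply hs
          have : ¬ ((j : ℕ) < k) := by simpa [hT] using hj
          simp [Fin.le_def]; omega
      _ = ((n : ℝ) - k) * Real.exp b := by
          rw [Finset.sum_const, hTccard, nsmul_eq_mul, Nat.cast_sub (le_of_lt hkn)]
  clear_value a b A B
  have hexpa : (0:ℝ) < Real.exp a := Real.exp_pos _
  have hexpb : (0:ℝ) < Real.exp b := Real.exp_pos _
  have hnk : (0:ℝ) < (n : ℝ) - k := by
    have : (k:ℝ) < n := by exact_mod_cast hkn
    linarith
  have hkpos : (0:ℝ) < (k:ℝ) := by exact_mod_cast hk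
  -- TV value
  have htv : ∑ i, |p i - phat i| = 2 * (B / (A + B)) := by
    rw [← Finset.sum_add_sum_compl T]
    have h1 : ∑ i ∈ T, |p i - phat i| = B / (A + B) := by
      have : ∀ i ∈ T, |p i - phat i| = Real.exp (s i) * (1/A - 1/(A+B)) := by
        intro i hi
        have hik : (i : ℕ) < k := by simpa [hT] using hi
        rw [hp, hphat, if_pos hik, hS]
        rw [abs_of_nonpos]
        · field_simp; ring
        · have : A ≤ A + B := by linarith
          have h2 : Real.exp (s i) / (A+B) ≤ Real.exp (s i) / A :=
            div_le_div_of_nonneg_left (le_of_lt (Real.exp_pos _)) hApos this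
          linarith
      rw [Finset.sum_congr rfl this, ← Finset.sum_mul, ← hA]
      field_simp
      ring
    have h2 : ∑ i ∈ Tᶜ, |p i - phat i| = B / (A + B) := by
      have : ∀ i ∈ Tᶜ, |p i - phat i| = Real.exp (s i) / (A + B) := by
        intro i hi
        have hik : ¬ ((i : ℕ) < k) := by simpa [hT] using hi
        rw [hp, hphat, if_neg hik, hS, sub_zero, abs_of_nonneg]
        positivity
      rw [Finset.sum_congr rfl this, ← Finset.sum_div, ← hB]
    rw [h1, h2]; ring
  constructor
  · rw [htv]
    have h1 : (1:ℝ)/2 * (2 * (B / (A+B))) = B / (A+B) := by ring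
    rw [h1]
    rw [div_le_div_iff₀ hSpos (by positivity)]
    have e1 : B * ((k:ℝ) * Real.exp a) ≤ A * (((n:ℝ)-k) * Real.exp b) := by
      calc B * ((k:ℝ) * Real.exp a) ≤ (((n:ℝ)-k) * Real.exp b) * ((k:ℝ) * Real.exp a) := by
            apply mul_le_mul_of_nonneg_right hBle; positivity
        _ ≤ (((n:ℝ)-k) * Real.exp b) * A := by
            apply mul_le_mul_of_nonneg_left hAge; positivity
        _ = A * (((n:ℝ)-k) * Real.exp b) := by ring
    nlinarith
  · rw [Real.exp_sub, div_eq_div_iff (by positivity) (by positivity)]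
    field_simp
    ring
end

section
/- Multi-gap tail split: for scores s_1 ≥ ... ≥ s_n, 1 ≤ k < n, and an integer m ≥ 0 with k + m + 1 ≤ n, the total-variation error of Top-k truncation satisfies TV(P, P̂) ≤ (1/k) [ m e^{s_{k+1} − s_k} + (n − k − m) e^{s_{k+m+1} − s_k} ]. -/
/-- **Multi-gap tail split.** For scores `s 0 ≥ ... ≥ s (n-1)`, `1 ≤ k < n`, and
`m ≥ 0` with `k + m + 1 ≤ n` (1-indexed scores `s_k, s_{k+1}, s_{k+m+1}` are
`s ⟨k-1⟩, s ⟨k⟩, s ⟨k+m⟩` in 0-indexing),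
`TV(P,P̂) ≤ (1/k) [ m e^{s_{k+1}-s_k} + (n-k-m) e^{s_{k+m+1}-s_k} ]`. -/
theorem tv_multigap_bound (n k m : ℕ) (hk : 1 ≤ k) (hkn : k < n)
    (hm : k + m + 1 ≤ n)
    (s : Fin n → ℝ) (hs : ∀ i j : Fin n, i ≤ j → s j ≤ s i)
    (p phat : Fin n → ℝ)
    (hp : ∀ i, p i = Real.exp (s i) / ∑ j, Real.exp (s j))
    (hphat : ∀ i : Fin n, phat i =
      if (i : ℕ) < k then
        Real.exp (s i) /
          ∑ j ∈ Finset.univ.filter (fun j : Fin n => (j : ℕ) < k), Real.exp (s j)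
      else 0) :
    (1 / 2) * ∑ i, |p i - phat i|
      ≤ (1 / (k : ℝ)) *
          ((m : ℝ) * Real.exp (s ⟨k, hkn⟩ - s ⟨k - 1, by omega⟩)
            + ((n : ℝ) - k - m) *
                Real.exp (s ⟨k + m, by omega⟩ - s ⟨k - 1, by omega⟩)) := by
  classical
  set E : ℕ → ℝ := fun j => if h : j < n then Real.exp (s ⟨j, h⟩) else 0 with hE
  have hEnn : ∀ j, 0 ≤ E j := by
    intro j; simp only [hE]; split <;> positivity
  set A := ∑ j ∈ Finset.range k, E j with hAdef
  set B := ∑ j ∈ Finset.Ico k n, E j with hBdef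
  have hA0 : 0 < A := by
    apply Finset.sum_pos
    · intro j hj
      have hjn : j < n := lt_of_lt_of_le (Finset.mem_range.mp hj) hkn.le
      simp [hE, hjn, Real.exp_pos]
    · exact ⟨0, Finset.mem_range.mpr hk⟩
  have hB0 : 0 ≤ B := Finset.sum_nonneg fun j _ => hEnn j
  -- the full sum splits as A + B
  have hSsplit : (∑ j : Fin n, Real.exp (s j)) = A + B := by
    calc ∑ j : Fin n, Real.exp (s j) = ∑ j : Fin n, E ↑j := by
          refine Finset.sum_congr rfl fun j _ => ?_
          simp [hE, j.isLt]
      _ = ∑ j ∈ Finset.range n, E j := Fin.sum_univ_eq_sum_range E n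
      _ = A + B := (Finset.sum_range_add_sum_Ico E hkn.le).symm
  -- the truncated denominator is A
  have hfiltA : (∑ j ∈ Finset.univ.filter (fun j : Fin n => (j : ℕ) < k),
      Real.exp (s j)) = A := by
    rw [Finset.sum_filter]
    calc ∑ j : Fin n, (if (j : ℕ) < k then Real.exp (s j) else 0)
        = ∑ j : Fin n, (fun j : ℕ => if j < k then E j else 0) ↑j := by
          refine Finset.sum_congr rfl fun j _ => ?_
          by_cases h : (j : ℕ) < k <;> simp [hE, h, j.isLt]
      _ = ∑ j ∈ Finset.range n, (if j < k then E j else 0) :=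
          Fin.sum_univ_eq_sum_range (fun j => if j < k then E j else 0) n
      _ = A := by
          rw [← Finset.sum_range_add_sum_Ico _ hkn.le]
          have h1 : ∑ j ∈ Finset.range k, (if j < k then E j else 0) = A :=
            Finset.sum_congr rfl fun j hj => by simp [Finset.mem_range.mp hj]
          have h2 : ∑ j ∈ Finset.Ico k n, (if j < k then E j else 0) = 0 :=
            Finset.sum_eq_zero fun j hj => by
              simp [Nat.not_lt.mpr (Finset.mem_Ico.mp hj).1]
          rw [h1, h2, add_zero]
  have hSpos : 0 < A + B := by linarith
  -- compute the absolute values termwise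
  have habs : ∀ i : Fin n, |p i - phat i| =
      (if (i : ℕ) < k then Real.exp (s i) else 0) * (1 / A - 1 / (A + B))
        + (if (i : ℕ) < k then 0 else Real.exp (s i)) * (1 / (A + B)) := by
    intro i
    rw [hp, hphat, hfiltA, hSsplit]
    by_cases h : (i : ℕ) < k
    · simp only [h, if_true]
      have he : 0 < Real.exp (s i) := Real.exp_pos _
      have hle : Real.exp (s i) / (A + B) ≤ Real.exp (s i) / A :=
        div_le_div_of_nonneg_left he.le hA0 (by linarith)
      rw [abs_of_nonpos (by linarith)]
      field_simp
      ring
    · simp only [h, if_false, sub_zero]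
      rw [abs_of_nonneg (by positivity)]
      ring
  -- sum of absolute values equals 2 B / (A+B)
  have hsum : ∑ i, |p i - phat i| = 2 * B / (A + B) := by
    have hsum1 : ∑ i : Fin n, (if (i : ℕ) < k then Real.exp (s i) else 0) = A := by
      rw [← hfiltA, Finset.sum_filter]
    have hsum2 : ∑ i : Fin n, (if (i : ℕ) < k then 0 else Real.exp (s i)) = B := by
      have : ∀ i : Fin n, (if (i : ℕ) < k then (0:ℝ) else Real.exp (s i)) =
          Real.exp (s i) - (if (i : ℕ) < k then Real.exp (s i) else 0) := by
        intro i; by_cases h : (i : ℕ) < k <;> simp [h]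
      rw [Finset.sum_congr rfl fun i _ => this i, Finset.sum_sub_distrib, hsum1,
        hSsplit]
      ring
    calc ∑ i, |p i - phat i|
        = ∑ i : Fin n, ((if (i : ℕ) < k then Real.exp (s i) else 0)
            * (1 / A - 1 / (A + B))
            + (if (i : ℕ) < k then 0 else Real.exp (s i)) * (1 / (A + B))) :=
          Finset.sum_congr rfl fun i _ => habs i
      _ = A * (1 / A - 1 / (A + B)) + B * (1 / (A + B)) := by
          rw [Finset.sum_add_distrib, ← Finset.sum_mul, ← Finset.sum_mul, hsum1,
            hsum2]
      _ = 2 * B / (A + B) := by field_simp; ring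
  -- lower bound on A
  have hAge : (k : ℝ) * Real.exp (s ⟨k - 1, by omega⟩) ≤ A := by
    have : ∀ j ∈ Finset.range k, Real.exp (s ⟨k - 1, by omega⟩) ≤ E j := by
      intro j hj
      have hjk : j < k := Finset.mem_range.mp hj
      have hjn : j < n := by omega
      have := hs ⟨j, hjn⟩ ⟨k - 1, by omega⟩ (by simp [Fin.le_def]; omega)
      simp only [hE, hjn, dif_pos]
      exact Real.exp_le_exp.mpr this
    calc (k : ℝ) * Real.exp (s ⟨k - 1, by omega⟩)
        = ∑ _j ∈ Finset.range k, Real.exp (s ⟨k - 1, by omega⟩) := by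
          rw [Finset.sum_const, Finset.card_range, nsmul_eq_mul]
      _ ≤ A := Finset.sum_le_sum this
  -- upper bound on B
  have hBle : B ≤ (m : ℝ) * Real.exp (s ⟨k, hkn⟩)
      + ((n : ℝ) - k - m) * Real.exp (s ⟨k + m, by omega⟩) := by
    have hsplit : B = ∑ j ∈ Finset.Ico k (k + m), E j
        + ∑ j ∈ Finset.Ico (k + m) n, E j := by
      rw [hBdef, ← Finset.sum_Ico_consecutive E (by omega : k ≤ k + m)
        (by omega : k + m ≤ n)]
    have h1 : ∑ j ∈ Finset.Ico k (k + m), E j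
        ≤ (m : ℝ) * Real.exp (s ⟨k, hkn⟩) := by
      have hb : ∀ j ∈ Finset.Ico k (k + m), E j ≤ Real.exp (s ⟨k, hkn⟩) := by
        intro j hj
        obtain ⟨h1, h2⟩ := Finset.mem_Ico.mp hj
        have hjn : j < n := by omega
        have := hs ⟨k, hkn⟩ ⟨j, hjn⟩ (by simp [Fin.le_def]; omega)
        simp only [hE, hjn, dif_pos]
        exact Real.exp_le_exp.mpr this
      calc ∑ j ∈ Finset.Ico k (k + m), E j
          ≤ ∑ _j ∈ Finset.Ico k (k + m), Real.exp (s ⟨k, hkn⟩) :=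
            Finset.sum_le_sum hb
        _ = (m : ℝ) * Real.exp (s ⟨k, hkn⟩) := by
            rw [Finset.sum_const, Nat.card_Ico, nsmul_eq_mul]
            norm_num
    have h2 : ∑ j ∈ Finset.Ico (k + m) n, E j
        ≤ ((n : ℝ) - k - m) * Real.exp (s ⟨k + m, by omega⟩) := by
      have hb : ∀ j ∈ Finset.Ico (k + m) n, E j
          ≤ Real.exp (s ⟨k + m, by omega⟩) := by
        intro j hj
        obtain ⟨h1, h2⟩ := Finset.mem_Ico.mp hj
        have := hs ⟨k + m, by omega⟩ ⟨j, h2⟩ (by simp [Fin.le_def]; omega)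
        simp only [hE, h2, dif_pos]
        exact Real.exp_le_exp.mpr this
      calc ∑ j ∈ Finset.Ico (k + m) n, E j
          ≤ ∑ _j ∈ Finset.Ico (k + m) n, Real.exp (s ⟨k + m, by omega⟩) :=
            Finset.sum_le_sum hb
        _ = ((n : ℝ) - k - m) * Real.exp (s ⟨k + m, by omega⟩) := by
            rw [Finset.sum_const, Nat.card_Ico, nsmul_eq_mul]
            have : ((n - (k + m) : ℕ) : ℝ) = (n : ℝ) - k - m := by
              push_cast [Nat.cast_sub (by omega : k + m ≤ n)]; ring
            rw [this]
    linarith [hsplit ▸ add_le_add h1 h2]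
  -- put everything together
  rw [hsum]
  have hstep1 : (1 / 2) * (2 * B / (A + B)) = B / (A + B) := by ring
  rw [hstep1]
  have hchain1 : B / (A + B) ≤ B / A :=
    div_le_div_of_nonneg_left hB0 hA0 (by linarith)
  have hZ : (0:ℝ) < Real.exp (s ⟨k - 1, by omega⟩) := Real.exp_pos _
  have hnum : (0:ℝ) ≤ (m : ℝ) * Real.exp (s ⟨k, hkn⟩)
      + ((n : ℝ) - k - m) * Real.exp (s ⟨k + m, by omega⟩) := by
    have hnm : (0:ℝ) ≤ (n : ℝ) - k - m := by
      have : (k + m : ℝ) ≤ n := by exact_mod_cast (by omega : k + m ≤ n)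
      linarith
    positivity
  have hk0 : (0:ℝ) < (k : ℝ) := by exact_mod_cast hk
  have hchain2 : B / A ≤ ((m : ℝ) * Real.exp (s ⟨k, hkn⟩)
      + ((n : ℝ) - k - m) * Real.exp (s ⟨k + m, by omega⟩))
        / ((k : ℝ) * Real.exp (s ⟨k - 1, by omega⟩)) :=
    div_le_div₀ hnum hBle (by positivity) hAge
  have hrhs : ((m : ℝ) * Real.exp (s ⟨k, hkn⟩)
      + ((n : ℝ) - k - m) * Real.exp (s ⟨k + m, by omega⟩))
        / ((k : ℝ) * Real.exp (s ⟨k - 1, by omega⟩))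
      = (1 / (k : ℝ)) *
          ((m : ℝ) * Real.exp (s ⟨k, hkn⟩ - s ⟨k - 1, by omega⟩)
            + ((n : ℝ) - k - m) *
                Real.exp (s ⟨k + m, by omega⟩ - s ⟨k - 1, by omega⟩)) := by
    rw [Real.exp_sub, Real.exp_sub]
    field_simp
    try ring
  calc B / (A + B) ≤ B / A := hchain1
    _ ≤ _ := hchain2
    _ = _ := hrhs
end

section
/- Head–tail diameter bound: with τ = Σ_{i>k} p_i and cross-set diameter diam_{H,T} = max over i > k and j ≤ k of ‖v_i − v_j‖₂, the output error satisfies ‖ Σ_{i=1}^{n} p_i v_i − Σ_{i=1}^{n} p̂_i v_i ‖₂ ≤ τ · diam_{H,T}. -/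
/-!
Conditioning on the head: `P̂` is `P` restricted to the first `k` indices and renormalised, so
`∑ p̂ᵢ vᵢ` is the centre of mass `m` of the head vectors with weights `pᵢ`. Since `P` puts mass
`1 - τ` on the head, `∑ pᵢ vᵢ - m = ∑_{i>k} pᵢ (vᵢ - m)`. Each `vᵢ - m` with `i > k` is a convex
combination of the differences `vᵢ - vⱼ`, `j ≤ k`, so its norm is at most the cross-set diameter.
-/

open Finset

section CenterMass

variable {ι R E : Type*} [Fintype ι]

theorem Finset.sum_ite_div_smul_eq_centerMass [Field R] [AddCommGroup E] [Module R E]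
    (P : ι → Prop) [DecidablePred P] (w : ι → R) (v : ι → E) :
    ∑ i, (if P i then w i / ∑ j ∈ univ.filter P, w j else 0) • v i =
      (univ.filter P).centerMass w v := by
  simp only [centerMass, smul_sum, ite_smul, zero_smul, ← sum_filter, smul_smul, div_eq_inv_mul]

variable [DecidableEq ι]

theorem Finset.sum_smul_sub_centerMass_eq [Field R] [AddCommGroup E] [Module R E]
    (H : Finset ι) {p : ι → R} (v : ι → E) (hp : ∑ i, p i = 1) (hH : ∑ i ∈ H, p i ≠ 0) :
    ∑ i, p i • v i - H.centerMass p v = ∑ i ∈ Hᶜ, p i • (v i - H.centerMass p v) := by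
  have h_head : ∑ i ∈ H, p i • v i = (∑ i ∈ H, p i) • H.centerMass p v :=
    (smul_inv_smul₀ hH _).symm
  have h_tail : ∑ i ∈ Hᶜ, p i = 1 - ∑ i ∈ H, p i := by
    rw [← hp, ← sum_add_sum_compl H p, add_sub_cancel_left]
  rw [← sum_add_sum_compl H, h_head]
  simp only [smul_sub, sum_sub_distrib, ← sum_smul, h_tail, sub_smul, one_smul]
  abel

theorem Finset.norm_sum_smul_sub_centerMass_le [SeminormedAddCommGroup E] [NormedSpace ℝ E]
    (H : Finset ι) {p : ι → ℝ} {v : ι → E} {D : ℝ} (hp₀ : ∀ i, 0 ≤ p i) (hp : ∑ i, p i = 1)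
    (hH : 0 < ∑ i ∈ H, p i) (hD : ∀ i ∉ H, ∀ j ∈ H, ‖v i - v j‖ ≤ D) :
    ‖∑ i, p i • v i - H.centerMass p v‖ ≤ (∑ i ∈ Hᶜ, p i) * D := by
  have h_dist : ∀ i ∈ Hᶜ, ‖v i - H.centerMass p v‖ ≤ D := by
    intro i hi
    have h_ball := (convex_closedBall (v i) D).centerMass_mem (fun j _ => hp₀ j) hH
      fun j hj => mem_closedBall_iff_norm'.2 (hD i (mem_compl.1 hi) j hj)
    exact mem_closedBall_iff_norm'.1 h_ball
  rw [H.sum_smul_sub_centerMass_eq v hp hH.ne', sum_mul]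
  calc ‖∑ i ∈ Hᶜ, p i • (v i - H.centerMass p v)‖
      ≤ ∑ i ∈ Hᶜ, p i * ‖v i - H.centerMass p v‖ := by
        refine (norm_sum_le _ _).trans_eq (sum_congr rfl fun i _ => ?_)
        rw [norm_smul, Real.norm_of_nonneg (hp₀ i)]
    _ ≤ ∑ i ∈ Hᶜ, p i * D :=
        sum_le_sum fun i hi => mul_le_mul_of_nonneg_left (h_dist i hi) (hp₀ i)

end CenterMass

theorem head_tail_diameter_bound_general (n k d : ℕ)
    (s : Fin n → ℝ)
    (p phat : Fin n → ℝ)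
    (hp : ∀ i, p i = Real.exp (s i) / ∑ j, Real.exp (s j))
    (hphat : ∀ i : Fin n, phat i =
      if (i : ℕ) < k then
        Real.exp (s i) /
          ∑ j ∈ Finset.univ.filter (fun j : Fin n => (j : ℕ) < k), Real.exp (s j)
      else 0)
    (v : Fin n → EuclideanSpace ℝ (Fin d))
    (τ : ℝ) (hτ : τ = ∑ i ∈ Finset.univ.filter (fun i : Fin n => k ≤ (i : ℕ)), p i)
    (D : ℝ)
    (hD : IsGreatest {x : ℝ | ∃ i j : Fin n, k ≤ (i : ℕ) ∧ (j : ℕ) < k ∧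
      x = ‖v i - v j‖} D) :
    ‖(∑ i, p i • v i) - ∑ i, phat i • v i‖ ≤ τ * D := by
  obtain ⟨_, j₀, -, hj₀, -⟩ := hD.1
  have hZ : 0 < ∑ j, Real.exp (s j) := sum_pos (fun j _ => Real.exp_pos _) ⟨j₀, mem_univ _⟩
  have h_mean : ∑ i, phat i • v i = (univ.filter fun j : Fin n => (j : ℕ) < k).centerMass p v := by
    have hp_eq : p = (∑ j, Real.exp (s j))⁻¹ • fun i => Real.exp (s i) := by
      ext i; rw [hp, div_eq_inv_mul]; rfl
    simp only [hphat, sum_ite_div_smul_eq_centerMass, hp_eq]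
    exact (centerMass_smul_left _ _ (inv_ne_zero hZ.ne')).symm
  set H := univ.filter fun j : Fin n => (j : ℕ) < k
  have hp₀ : ∀ i, 0 ≤ p i := fun i => by rw [hp]; positivity
  have hp₁ : ∑ i, p i = 1 := by simp only [hp, ← sum_div, div_self hZ.ne']
  have hH : 0 < ∑ i ∈ H, p i :=
    sum_pos (fun i _ => by rw [hp]; positivity) ⟨j₀, mem_filter.2 ⟨mem_univ _, hj₀⟩⟩
  have h_tail : τ = ∑ i ∈ Hᶜ, p i := by simp only [hτ, H, compl_filter, not_lt]
  rw [h_mean, h_tail]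
  exact H.norm_sum_smul_sub_centerMass_le hp₀ hp₁ hH fun i hi j hj =>
    hD.2 ⟨i, j, by simpa [H] using hi, by simpa [H] using hj, rfl⟩

/-- **Head–tail diameter bound.** With tail mass `τ = ∑_{i>k} p i` and cross-set
diameter `D = max_{i>k, j≤k} ‖v i − v j‖₂` (expressed as `IsGreatest`), the
output error satisfies `‖∑ p i • v i − ∑ p̂ i • v i‖ ≤ τ · D`. -/
theorem head_tail_diameter_bound (n k d : ℕ) (hk : 1 ≤ k) (hkn : k < n)
    (s : Fin n → ℝ) (hs : ∀ i j : Fin n, i ≤ j → s j ≤ s i)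
    (p phat : Fin n → ℝ)
    (hp : ∀ i, p i = Real.exp (s i) / ∑ j, Real.exp (s j))
    (hphat : ∀ i : Fin n, phat i =
      if (i : ℕ) < k then
        Real.exp (s i) /
          ∑ j ∈ Finset.univ.filter (fun j : Fin n => (j : ℕ) < k), Real.exp (s j)
      else 0)
    (v : Fin n → EuclideanSpace ℝ (Fin d))
    (τ : ℝ) (hτ : τ = ∑ i ∈ Finset.univ.filter (fun i : Fin n => k ≤ (i : ℕ)), p i)
    (D : ℝ)
    (hD : IsGreatest {x : ℝ | ∃ i j : Fin n, k ≤ (i : ℕ) ∧ (j : ℕ) < k ∧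
      x = ‖v i - v j‖} D) :
    ‖(∑ i, p i • v i) - ∑ i, phat i • v i‖ ≤ τ * D :=
  head_tail_diameter_bound_general n k d s p phat hp hphat v τ hτ D hD
end

section
/- Centered chi-square–variance bound: with τ = Σ_{i>k} p_i, μ_P = Σ_{i=1}^{n} p_i v_i, and Var_P(V) = Σ_{i=1}^{n} p_i ‖v_i − μ_P‖₂², the output error satisfies ‖ Σ_i p_i v_i − Σ_i p̂_i v_i ‖₂ ≤ √(τ/(1−τ)) · √(Var_P(V)). -/
/-!
Both `P` and `P̂` have mass one, so the error `∑ (p i - p̂ i) • v i` equals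
`∑ (p i - p̂ i) • (v i - μ)` for any centre `μ`. The triangle inequality and Cauchy–Schwarz with
weights `p i` bound it by `√(D_χ²(P̂ ‖ P)) · √(∑ p i ‖v i - μ‖²)`, and for a renormalized
truncation to a set `S` the chi-square divergence is the ratio of discarded to kept mass,
`τ / (1 - τ)`.
-/

open Finset

variable {ι : Type*}

noncomputable def truncate [DecidableEq ι] (S : Finset ι) (p : ι → ℝ) : ι → ℝ :=
  fun i => if i ∈ S then p i / ∑ j ∈ S, p j else 0

theorem truncate_div_const [DecidableEq ι] (S : Finset ι) (w : ι → ℝ) {c : ℝ} (hc : c ≠ 0) :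
    truncate S (fun i => w i / c) = truncate S w := by
  funext i
  simp only [truncate, ← sum_div, div_div_div_cancel_right₀ hc]

variable [Fintype ι]

/-- The chi-square divergence `D_χ²(q ‖ p)`. -/
noncomputable def chiSquareDiv (q p : ι → ℝ) : ℝ :=
  ∑ i, (q i - p i) ^ 2 / p i

theorem sum_smul_sub_sum_smul_eq_sum_sub_smul_sub {E : Type*} [AddCommGroup E] [Module ℝ E]
    {p q : ι → ℝ} (hpq : ∑ i, q i = ∑ i, p i) (v : ι → E) (μ : E) :
    ∑ i, p i • v i - ∑ i, q i • v i = ∑ i, (p i - q i) • (v i - μ) := by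
  simp only [smul_sub, sub_smul, sum_sub_distrib, ← sum_smul, hpq, sub_self, sub_zero]

theorem norm_sum_smul_sub_sum_smul_le_sqrt_chiSquareDiv_mul_sqrt {E : Type*}
    [SeminormedAddCommGroup E] [NormedSpace ℝ E] {p q : ι → ℝ} (hp : ∀ i, 0 < p i)
    (hpq : ∑ i, q i = ∑ i, p i) (v : ι → E) (μ : E) :
    ‖∑ i, p i • v i - ∑ i, q i • v i‖ ≤
      √(chiSquareDiv q p) * √(∑ i, p i * ‖v i - μ‖ ^ 2) := by
  rw [sum_smul_sub_sum_smul_eq_sum_sub_smul_sub hpq v μ, ← Real.sqrt_mul (by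
    exact sum_nonneg fun i _ => div_nonneg (sq_nonneg _) (hp i).le)]
  refine (norm_sum_le _ _).trans (Real.le_sqrt_of_sq_le ?_)
  refine sum_sq_le_sum_mul_sum_of_sq_le_mul univ
    (fun i _ => div_nonneg (sq_nonneg _) (hp i).le)
    (fun i _ => mul_nonneg (hp i).le (sq_nonneg _)) fun i _ => le_of_eq ?_
  rw [norm_smul, Real.norm_eq_abs, mul_pow, sq_abs, ← neg_sub, neg_sq]
  field_simp [(hp i).ne']

theorem sum_truncate [DecidableEq ι] {S : Finset ι} {p : ι → ℝ} (hS : ∑ i ∈ S, p i ≠ 0) :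
    ∑ i, truncate S p i = 1 := by
  simp only [truncate]
  rw [sum_ite_mem_eq, ← sum_div, div_self hS]

theorem chiSquareDiv_truncate [DecidableEq ι] {S : Finset ι} {p : ι → ℝ} (hp : ∑ i, p i = 1)
    (hS : ∑ i ∈ S, p i ≠ 0) :
    chiSquareDiv (truncate S p) p = (∑ i ∈ Sᶜ, p i) / ∑ i ∈ S, p i := by
  set m := ∑ i ∈ S, p i
  have hcompl : ∑ i ∈ Sᶜ, p i = 1 - m := by rw [← hp, ← sum_add_sum_compl S p]; ring
  have hin : ∀ i ∈ S, (truncate S p i - p i) ^ 2 / p i = p i * (1 / m - 1) ^ 2 := by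
    intro i hi
    rcases eq_or_ne (p i) 0 with h | h
    · simp [truncate, h]
    · simp only [truncate, hi, if_true]
      change (p i / m - p i) ^ 2 / p i = _
      field_simp
  have hout : ∀ i ∈ Sᶜ, (truncate S p i - p i) ^ 2 / p i = p i := by
    intro i hi
    rw [mem_compl] at hi
    simp only [truncate, hi, if_false, zero_sub]
    rw [neg_sq, sq, mul_self_div_self]
  rw [chiSquareDiv, ← sum_add_sum_compl S, sum_congr rfl hin, sum_congr rfl hout, ← sum_mul,
    hcompl]
  field_simp
  ring

theorem chi_square_variance_bound_general (n k d : ℕ) (hkn : k < n)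
    (s : Fin n → ℝ)
    (p phat : Fin n → ℝ)
    (hp : ∀ i, p i = Real.exp (s i) / ∑ j, Real.exp (s j))
    (hphat : ∀ i : Fin n, phat i =
      if (i : ℕ) < k then
        Real.exp (s i) /
          ∑ j ∈ Finset.univ.filter (fun j : Fin n => (j : ℕ) < k), Real.exp (s j)
      else 0)
    (v : Fin n → EuclideanSpace ℝ (Fin d))
    (τ : ℝ) (hτ : τ = ∑ i ∈ Finset.univ.filter (fun i : Fin n => k ≤ (i : ℕ)), p i)
    (hτ1 : τ < 1)
    (μP : EuclideanSpace ℝ (Fin d))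
    (varP : ℝ) (hvarP : varP = ∑ i, p i * ‖v i - μP‖ ^ 2) :
    ‖(∑ i, p i • v i) - ∑ i, phat i • v i‖
      ≤ Real.sqrt (τ / (1 - τ)) * Real.sqrt varP := by
  set S := univ.filter fun i : Fin n => (i : ℕ) < k
  have hZ : 0 < ∑ j, Real.exp (s j) :=
    sum_pos (fun j _ => Real.exp_pos _) ⟨⟨0, by omega⟩, mem_univ _⟩
  have hp_pos : ∀ i, 0 < p i := fun i => by rw [hp]; exact div_pos (Real.exp_pos _) hZ
  have hp_sum : ∑ i, p i = 1 := by simp only [hp, ← sum_div, div_self hZ.ne']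
  have hτ_compl : τ = ∑ i ∈ Sᶜ, p i := by
    simp only [hτ, S, compl_filter, not_lt]
  have hmass : ∑ i ∈ S, p i = 1 - τ := by
    rw [hτ_compl, ← hp_sum, ← sum_add_sum_compl S p]; ring
  have hphat_eq : phat = truncate S p := by
    rw [funext hp, truncate_div_const S _ hZ.ne']
    funext i
    simp [hphat, truncate, S]
  have hS : ∑ i ∈ S, p i ≠ 0 := by rw [hmass]; linarith
  rw [hphat_eq, hvarP, ← hmass, hτ_compl, ← chiSquareDiv_truncate hp_sum hS]
  exact norm_sum_smul_sub_sum_smul_le_sqrt_chiSquareDiv_mul_sqrt hp_pos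
    (by rw [sum_truncate hS, hp_sum]) v μP

/-- **Centered chi-square–variance bound.** With tail mass `τ = ∑_{i>k} p i`,
`0 < τ < 1`, full mean `μ_P = ∑ p i • v i`, and variance
`Var_P(V) = ∑ p i ‖v i − μ_P‖²`, the output error satisfies
`‖∑ p i • v i − ∑ p̂ i • v i‖ ≤ √(τ/(1−τ)) · √(Var_P(V))`. -/
theorem chi_square_variance_bound (n k d : ℕ) (hk : 1 ≤ k) (hkn : k < n)
    (s : Fin n → ℝ) (hs : ∀ i j : Fin n, i ≤ j → s j ≤ s i)
    (p phat : Fin n → ℝ)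
    (hp : ∀ i, p i = Real.exp (s i) / ∑ j, Real.exp (s j))
    (hphat : ∀ i : Fin n, phat i =
      if (i : ℕ) < k then
        Real.exp (s i) /
          ∑ j ∈ Finset.univ.filter (fun j : Fin n => (j : ℕ) < k), Real.exp (s j)
      else 0)
    (v : Fin n → EuclideanSpace ℝ (Fin d))
    (τ : ℝ) (hτ : τ = ∑ i ∈ Finset.univ.filter (fun i : Fin n => k ≤ (i : ℕ)), p i)
    (hτ0 : 0 < τ) (hτ1 : τ < 1)
    (μP : EuclideanSpace ℝ (Fin d)) (hμP : μP = ∑ i, p i • v i)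
    (varP : ℝ) (hvarP : varP = ∑ i, p i * ‖v i - μP‖ ^ 2) :
    ‖(∑ i, p i • v i) - ∑ i, phat i • v i‖
      ≤ Real.sqrt (τ / (1 - τ)) * Real.sqrt varP :=
  chi_square_variance_bound_general n k d hkn s p phat hp hphat v τ hτ hτ1 μP varP hvarP
end

section
/- Best available certificate: let C ≥ max_i ‖v_i‖₂, τ = Σ_{i>k} p_i with 0 < τ < 1, diam_{H,T} = max over i > k, j ≤ k of ‖v_i − v_j‖₂, μ_P = Σ_i p_i v_i and Var_P(V) = Σ_i p_i ‖v_i − μ_P‖₂². Then ‖ Σ_i p_i v_i − Σ_i p̂_i v_i ‖₂ ≤ min{ τ · diam_{H,T}, √(τ/(1−τ)) · √(Var_P(V)), 2Cτ }. -/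
/-- **Best available certificate.** Let `C ≥ max_i ‖v i‖`, `τ = ∑_{i>k} p i` with
`0 < τ < 1`, `D = diam_{H,T} = max_{i>k, j≤k} ‖v i − v j‖` (as `IsGreatest`),
`μ_P = ∑ p i • v i` and `Var_P(V) = ∑ p i ‖v i − μ_P‖²`.  Then
`‖∑ p i • v i − ∑ p̂ i • v i‖ ≤ min { τ·D, √(τ/(1−τ))·√(Var_P(V)), 2Cτ }`. -/
theorem best_available_certificate (n k d : ℕ) (hk : 1 ≤ k) (hkn : k < n)
    (s : Fin n → ℝ) (hs : ∀ i j : Fin n, i ≤ j → s j ≤ s i)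
    (p phat : Fin n → ℝ)
    (hp : ∀ i, p i = Real.exp (s i) / ∑ j, Real.exp (s j))
    (hphat : ∀ i : Fin n, phat i =
      if (i : ℕ) < k then
        Real.exp (s i) /
          ∑ j ∈ Finset.univ.filter (fun j : Fin n => (j : ℕ) < k), Real.exp (s j)
      else 0)
    (v : Fin n → EuclideanSpace ℝ (Fin d))
    (C : ℝ) (hC : ∀ i, ‖v i‖ ≤ C)
    (τ : ℝ) (hτ : τ = ∑ i ∈ Finset.univ.filter (fun i : Fin n => k ≤ (i : ℕ)), p i)
    (hτ0 : 0 < τ) (hτ1 : τ < 1)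
    (D : ℝ)
    (hD : IsGreatest {x : ℝ | ∃ i j : Fin n, k ≤ (i : ℕ) ∧ (j : ℕ) < k ∧
      x = ‖v i - v j‖} D)
    (μP : EuclideanSpace ℝ (Fin d)) (hμP : μP = ∑ i, p i • v i)
    (varP : ℝ) (hvarP : varP = ∑ i, p i * ‖v i - μP‖ ^ 2) :
    ‖(∑ i, p i • v i) - ∑ i, phat i • v i‖
      ≤ min (τ * D)
          (min (Real.sqrt (τ / (1 - τ)) * Real.sqrt varP) (2 * C * τ)) := by
  classical
  have hn0 : 0 < n := by omega
  set H : Finset (Fin n) := Finset.univ.filter (fun i : Fin n => (i : ℕ) < k) with hHdef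
  set T : Finset (Fin n) := Finset.univ.filter (fun i : Fin n => k ≤ (i : ℕ)) with hTdef
  have hTc : T = Hᶜ := by
    ext i
    simp [hHdef, hTdef, not_lt]
  have hS : 0 < ∑ j, Real.exp (s j) :=
    Finset.sum_pos (fun _ _ => Real.exp_pos _) ⟨⟨0, hn0⟩, Finset.mem_univ _⟩
  have h1τ : 0 < 1 - τ := by linarith
  have hppos : ∀ i, 0 < p i := fun i => by rw [hp]; positivity
  have hpsum : ∑ i, p i = 1 := by
    simp only [hp]
    rw [← Finset.sum_div, div_self hS.ne']
  have hHT : ∀ {M : Type} [AddCommGroup M] (f : Fin n → M),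
      ∑ i ∈ H, f i + ∑ i ∈ T, f i = ∑ i, f i := by
    intro M _ f
    rw [hTc, Finset.sum_add_sum_compl]
  have hτT : ∑ i ∈ T, p i = τ := hτ.symm
  have hτH : ∑ i ∈ H, p i = 1 - τ := by
    have h := hHT p
    rw [hpsum, hτT] at h
    linarith
  have hSkS : 1 - τ = (∑ j ∈ H, Real.exp (s j)) / (∑ j, Real.exp (s j)) := by
    rw [← hτH, Finset.sum_div]
    exact Finset.sum_congr rfl fun i _ => hp i
  have hSk : 0 < ∑ j ∈ H, Real.exp (s j) :=
    Finset.sum_pos (fun _ _ => Real.exp_pos _) ⟨⟨0, hn0⟩, by simp [hHdef]; omega⟩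
  have hphatH : ∀ i ∈ H, phat i = p i / (1 - τ) := by
    intro i hi
    have hik : (i : ℕ) < k := by simpa [hHdef] using hi
    rw [hphat i, if_pos hik, hp, hSkS]
    field_simp
  have hphatT : ∀ i ∈ T, phat i = 0 := by
    intro i hi
    have hik : k ≤ (i : ℕ) := by simpa [hTdef] using hi
    rw [hphat i, if_neg (by omega)]
  -- the difference
  have hΔ : (∑ i, p i • v i) - ∑ i, phat i • v i
      = (∑ i ∈ T, p i • v i) - (τ / (1 - τ)) • ∑ i ∈ H, p i • v i := by
    have hT0 : ∑ i ∈ T, phat i • v i = 0 :=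
      Finset.sum_eq_zero fun i hi => by rw [hphatT i hi, zero_smul]
    have hHp : ∑ i ∈ H, phat i • v i = ∑ i ∈ H, (p i / (1 - τ)) • v i :=
      Finset.sum_congr rfl fun i hi => by rw [hphatH i hi]
    rw [← hHT (fun i => p i • v i), ← hHT (fun i => phat i • v i), hT0, add_zero, hHp]
    rw [Finset.smul_sum]
    have : ∀ i ∈ H, (p i / (1 - τ)) • v i = p i • v i + (τ / (1 - τ)) • (p i • v i) := by
      intro i _
      rw [smul_smul, ← add_smul]
      congr 1
      field_simp
      ring
    rw [Finset.sum_congr rfl this, Finset.sum_add_distrib]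
    abel
  rw [hΔ]
  have hC0 : 0 ≤ C := le_trans (norm_nonneg _) (hC ⟨0, hn0⟩)
  -- Bound 3 : 2Cτ
  have bound3 : ‖(∑ i ∈ T, p i • v i) - (τ / (1 - τ)) • ∑ i ∈ H, p i • v i‖ ≤ 2 * C * τ := by
    have hTn : ‖∑ i ∈ T, p i • v i‖ ≤ τ * C := by
      calc ‖∑ i ∈ T, p i • v i‖ ≤ ∑ i ∈ T, ‖p i • v i‖ := norm_sum_le _ _
        _ ≤ ∑ i ∈ T, p i * C := by
            refine Finset.sum_le_sum fun i _ => ?_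
            rw [norm_smul, Real.norm_eq_abs, abs_of_pos (hppos i)]
            exact mul_le_mul_of_nonneg_left (hC i) (hppos i).le
        _ = τ * C := by rw [← Finset.sum_mul, hτT]
    have hHn : ‖∑ i ∈ H, p i • v i‖ ≤ (1 - τ) * C := by
      calc ‖∑ i ∈ H, p i • v i‖ ≤ ∑ i ∈ H, ‖p i • v i‖ := norm_sum_le _ _
        _ ≤ ∑ i ∈ H, p i * C := by
            refine Finset.sum_le_sum fun i _ => ?_
            rw [norm_smul, Real.norm_eq_abs, abs_of_pos (hppos i)]
            exact mul_le_mul_of_nonneg_left (hC i) (hppos i).le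
        _ = (1 - τ) * C := by rw [← Finset.sum_mul, hτH]
    calc ‖(∑ i ∈ T, p i • v i) - (τ / (1 - τ)) • ∑ i ∈ H, p i • v i‖
        ≤ ‖∑ i ∈ T, p i • v i‖ + ‖(τ / (1 - τ)) • ∑ i ∈ H, p i • v i‖ := norm_sub_le _ _
      _ ≤ τ * C + (τ / (1 - τ)) * ((1 - τ) * C) := by
          refine add_le_add hTn ?_
          rw [norm_smul, Real.norm_eq_abs, abs_of_pos (div_pos hτ0 h1τ)]
          exact mul_le_mul_of_nonneg_left hHn (div_pos hτ0 h1τ).le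
      _ = 2 * C * τ := by field_simp; ring
  -- Bound 1 : τ D
  have bound1 : ‖(∑ i ∈ T, p i • v i) - (τ / (1 - τ)) • ∑ i ∈ H, p i • v i‖ ≤ τ * D := by
    have key : (∑ i ∈ T, p i • v i) - (τ / (1 - τ)) • ∑ i ∈ H, p i • v i
        = ∑ i ∈ T, ∑ j ∈ H, (p i * p j / (1 - τ)) • (v i - v j) := by
      have h1 : ∑ i ∈ T, ∑ j ∈ H, (p i * p j / (1 - τ)) • v i = ∑ i ∈ T, p i • v i := by
        refine Finset.sum_congr rfl fun i _ => ?_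
        rw [← Finset.sum_smul]
        congr 1
        rw [show (∑ j ∈ H, p i * p j / (1 - τ)) = (p i / (1-τ)) * ∑ j ∈ H, p j by
          rw [Finset.mul_sum]; exact Finset.sum_congr rfl fun j _ => by ring]
        rw [hτH]
        field_simp
      have h2 : ∑ i ∈ T, ∑ j ∈ H, (p i * p j / (1 - τ)) • v j
          = (τ / (1 - τ)) • ∑ j ∈ H, p j • v j := by
        rw [Finset.sum_comm, Finset.smul_sum]
        refine Finset.sum_congr rfl fun j _ => ?_
        rw [← Finset.sum_smul, smul_smul]
        congr 1
        rw [show (∑ i ∈ T, p i * p j / (1 - τ)) = (∑ i ∈ T, p i) * (p j / (1-τ)) by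
          rw [Finset.sum_mul]; exact Finset.sum_congr rfl fun i _ => by ring]
        rw [hτT]
        ring
      calc (∑ i ∈ T, p i • v i) - (τ / (1 - τ)) • ∑ i ∈ H, p i • v i
          = (∑ i ∈ T, ∑ j ∈ H, (p i * p j / (1 - τ)) • v i)
            - ∑ i ∈ T, ∑ j ∈ H, (p i * p j / (1 - τ)) • v j := by rw [h1, h2]
        _ = ∑ i ∈ T, ∑ j ∈ H, (p i * p j / (1 - τ)) • (v i - v j) := by
            rw [← Finset.sum_sub_distrib]
            refine Finset.sum_congr rfl fun i _ => ?_
            rw [← Finset.sum_sub_distrib]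
            exact Finset.sum_congr rfl fun j _ => (smul_sub _ _ _).symm
    rw [key]
    have hDub : ∀ i ∈ T, ∀ j ∈ H, ‖v i - v j‖ ≤ D := by
      intro i hi j hj
      exact hD.2 ⟨i, j, by simpa [hTdef] using hi, by simpa [hHdef] using hj, rfl⟩
    calc ‖∑ i ∈ T, ∑ j ∈ H, (p i * p j / (1 - τ)) • (v i - v j)‖
        ≤ ∑ i ∈ T, ∑ j ∈ H, ‖(p i * p j / (1 - τ)) • (v i - v j)‖ := by
          refine le_trans (norm_sum_le _ _) (Finset.sum_le_sum fun i _ => norm_sum_le _ _)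
      _ ≤ ∑ i ∈ T, ∑ j ∈ H, (p i * p j / (1 - τ)) * D := by
          refine Finset.sum_le_sum fun i hi => Finset.sum_le_sum fun j hj => ?_
          rw [norm_smul, Real.norm_eq_abs,
            abs_of_pos (div_pos (mul_pos (hppos i) (hppos j)) h1τ)]
          exact mul_le_mul_of_nonneg_left (hDub i hi j hj)
            (div_pos (mul_pos (hppos i) (hppos j)) h1τ).le
      _ = (∑ i ∈ T, ∑ j ∈ H, p i * p j / (1 - τ)) * D := by
          rw [Finset.sum_mul]
          exact Finset.sum_congr rfl fun i _ => (Finset.sum_mul _ _ _).symm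
      _ = τ * D := by
          congr 1
          rw [show (∑ i ∈ T, ∑ j ∈ H, p i * p j / (1 - τ))
              = (∑ i ∈ T, p i) * (∑ j ∈ H, p j) / (1 - τ) by
            rw [Finset.sum_mul, Finset.sum_div]
            refine Finset.sum_congr rfl fun i _ => ?_
            rw [Finset.mul_sum, Finset.sum_div]]
          rw [hτT, hτH]
          field_simp
  -- Bound 2 : sqrt(τ/(1-τ)) * sqrt(varP)
  have bound2 : ‖(∑ i ∈ T, p i • v i) - (τ / (1 - τ)) • ∑ i ∈ H, p i • v i‖
      ≤ Real.sqrt (τ / (1 - τ)) * Real.sqrt varP := by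
    rw [← hΔ]
    have hphatsum : ∑ i, phat i = 1 := by
      rw [← hHT phat]
      rw [Finset.sum_congr rfl hphatT, Finset.sum_const_zero, add_zero]
      rw [Finset.sum_congr rfl hphatH, ← Finset.sum_div, hτH, div_self h1τ.ne']
    have h0 : ∑ i, (p i - phat i) = 0 := by
      rw [Finset.sum_sub_distrib, hpsum, hphatsum, sub_self]
    have key : (∑ i, p i • v i) - ∑ i, phat i • v i
        = ∑ i, (p i - phat i) • (v i - μP) := by
      have expand : ∑ i, (p i - phat i) • (v i - μP)
          = (∑ i, (p i - phat i) • v i) - (∑ i, (p i - phat i)) • μP := by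
        rw [Finset.sum_smul, ← Finset.sum_sub_distrib]
        exact Finset.sum_congr rfl fun i _ => by rw [smul_sub]
      rw [expand, h0, zero_smul, sub_zero, ← Finset.sum_sub_distrib]
      exact Finset.sum_congr rfl fun i _ => by rw [sub_smul]
    rw [key]
    set f : Fin n → ℝ := fun i => |p i - phat i| / Real.sqrt (p i) with hf
    set g : Fin n → ℝ := fun i => Real.sqrt (p i) * ‖v i - μP‖ with hg
    have hfg : ∀ i, |p i - phat i| * ‖v i - μP‖ = f i * g i := by
      intro i
      rw [hf, hg]
      have hs0 : Real.sqrt (p i) ≠ 0 := ne_of_gt (Real.sqrt_pos.mpr (hppos i))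
      field_simp
    have step1 : ‖∑ i, (p i - phat i) • (v i - μP)‖ ≤ ∑ i, f i * g i := by
      refine le_trans (norm_sum_le _ _) (le_of_eq ?_)
      refine Finset.sum_congr rfl fun i _ => ?_
      rw [norm_smul, Real.norm_eq_abs, hfg]
    have hf2 : ∑ i, f i ^ 2 = τ / (1 - τ) := by
      have : ∀ i, f i ^ 2 = (p i - phat i) ^ 2 / p i := by
        intro i
        rw [hf]
        rw [div_pow, sq_abs, Real.sq_sqrt (hppos i).le]
      rw [Finset.sum_congr rfl fun i _ => this i]
      rw [← hHT (fun i => (p i - phat i) ^ 2 / p i)]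
      have hH2 : ∑ i ∈ H, (p i - phat i) ^ 2 / p i = τ ^ 2 / (1 - τ) := by
        have : ∀ i ∈ H, (p i - phat i) ^ 2 / p i = p i * (τ ^2 / (1 - τ)^2) := by
          intro i hi
          rw [hphatH i hi]
          rw [show p i - p i / (1 - τ) = p i * (-τ / (1 - τ)) by field_simp; ring]
          rw [mul_pow, pow_two (p i), mul_assoc, mul_div_assoc, mul_div_cancel_left₀ _ (hppos i).ne']
          congr 1
          rw [div_pow, neg_pow]
          ring
        rw [Finset.sum_congr rfl this, ← Finset.sum_mul, hτH]
        field_simp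
      have hT2 : ∑ i ∈ T, (p i - phat i) ^ 2 / p i = τ := by
        have : ∀ i ∈ T, (p i - phat i) ^ 2 / p i = p i := by
          intro i hi
          rw [hphatT i hi, sub_zero, pow_two, mul_div_assoc, div_self (hppos i).ne', mul_one]
        rw [Finset.sum_congr rfl this, hτT]
      rw [hH2, hT2]
      field_simp
      ring
    have hg2 : ∑ i, g i ^ 2 = varP := by
      rw [hvarP]
      refine Finset.sum_congr rfl fun i _ => ?_
      rw [hg, mul_pow, Real.sq_sqrt (hppos i).le]
    have hfgnn : 0 ≤ ∑ i, f i * g i := by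
      refine Finset.sum_nonneg fun i _ => mul_nonneg ?_ ?_ <;> positivity
    have cs : (∑ i, f i * g i) ^ 2 ≤ (τ / (1 - τ)) * varP := by
      rw [← hf2, ← hg2]
      exact Finset.sum_mul_sq_le_sq_mul_sq _ f g
    have hvar0 : 0 ≤ varP := by
      rw [hvarP]
      exact Finset.sum_nonneg fun i _ => mul_nonneg (hppos i).le (by positivity)
    calc ‖∑ i, (p i - phat i) • (v i - μP)‖ ≤ ∑ i, f i * g i := step1
      _ ≤ Real.sqrt ((τ / (1 - τ)) * varP) :=
          (Real.le_sqrt hfgnn (mul_nonneg (div_nonneg hτ0.le h1τ.le) hvar0)).mpr cs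
      _ = Real.sqrt (τ / (1 - τ)) * Real.sqrt varP :=
          Real.sqrt_mul (div_nonneg hτ0.le h1τ.le) _
  exact le_min bound1 (le_min bound2 bound3)
end

section
/- Maximum-spanning-tree characterization of the minimax cut: let w be a symmetric nonnegative edge-weight function on the complete graph on a finite vertex set 𝒱 with |𝒱| ≥ 2, let T* be any spanning tree of the complete graph maximizing total edge weight, and let α be the minimum weight of an edge of T*. Then the minimax cut value φ* = min over nonempty proper subsets H ⊂ 𝒱 of φ(H) equals α, and deleting from T* an edge of weight α splits 𝒱 into two parts H, 𝒱\H with φ(H) = α. -/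
open scoped Classical

/-- Total weight of (the edges of) a graph `T` on a finite vertex set, for a
symmetric weight function `w`. -/
noncomputable def treeWeight {V : Type*} [Fintype V] (w : V → V → ℝ)
    (hsymm : ∀ i j, w i j = w j i) (T : SimpleGraph V) : ℝ :=
  ∑ e ∈ T.edgeFinset, Sym2.lift ⟨w, hsymm⟩ e

/-- Cut value `φ(H) = max { w i j : i ∈ H, j ∉ H }` of a set of vertices
(as a supremum; for nonempty proper `H` the set is finite and nonempty, so this
is the maximum). -/
noncomputable def cutValue {V : Type*} [Fintype V] (w : V → V → ℝ)
    (H : Finset V) : ℝ :=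
  sSup {x : ℝ | ∃ i ∈ H, ∃ j ∉ H, x = w i j}

/-! If `{i, j}` is an edge of a maximum spanning tree `T` and `{i', j'}` crosses the cut obtained
by deleting `{i, j}` from `T`, then `w i' j' ≤ w i j`: otherwise exchanging the two edges would
give a heavier spanning tree. So the cut at a lightest tree edge has value `α`, and every other cut
has value at least `α` because the connected tree `T` has an edge crossing it. -/

section CutValue

variable {V : Type*} [Fintype V] (w : V → V → ℝ) {H : Finset V} {i j : V}

lemma le_cutValue (hi : i ∈ H) (hj : j ∉ H) : w i j ≤ cutValue w H := by
  refine le_csSup ((Set.finite_range fun p : V × V => w p.1 p.2).subset ?_).bddAbove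
    ⟨i, hi, j, hj, rfl⟩
  rintro _ ⟨i', -, j', -, rfl⟩
  exact ⟨(i', j'), rfl⟩

lemma cutValue_eq_of_forall_le (hi : i ∈ H) (hj : j ∉ H)
    (hle : ∀ i' ∈ H, ∀ j' ∉ H, w i' j' ≤ w i j) : cutValue w H = w i j := by
  refine IsGreatest.csSup_eq ⟨⟨i, hi, j, hj, rfl⟩, ?_⟩
  rintro _ ⟨i', hi', j', hj', rfl⟩
  exact hle i' hi' j' hj'

end CutValue

namespace SimpleGraph

variable {V : Type*} {G : SimpleGraph V} {i j i' j' : V}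

lemma Walk.reachable_deleteEdges_or {x : V} (p : G.Walk x i) (j : V) :
    (G.deleteEdges {s(i, j)}).Reachable x i ∨ (G.deleteEdges {s(i, j)}).Reachable x j := by
  induction p with
  | nil => exact .inl .rfl
  | @cons x y i hxy p ih =>
    by_cases he : s(x, y) = s(i, j)
    · rcases Sym2.eq_iff.mp he with ⟨rfl, -⟩ | ⟨rfl, -⟩
      · exact .inl .rfl
      · exact .inr .rfl
    · have hxy' : (G.deleteEdges {s(i, j)}).Adj x y := by simp [hxy, he]
      exact ih.imp hxy'.reachable.trans hxy'.reachable.trans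

lemma Connected.reachable_deleteEdges_or (hG : G.Connected) (i j x : V) :
    (G.deleteEdges {s(i, j)}).Reachable i x ∨ (G.deleteEdges {s(i, j)}).Reachable j x :=
  ((hG x i).some.reachable_deleteEdges_or j).imp .symm .symm

lemma edgeSet_deleteEdges_sup_edge (hne : i' ≠ j') :
    (G.deleteEdges {s(i, j)} ⊔ edge i' j').edgeSet =
      insert s(i', j') (G.edgeSet \ {s(i, j)}) := by
  rw [edgeSet_sup, edgeSet_deleteEdges, edgeSet_edge_of_ne hne, Set.union_singleton]

lemma Connected.deleteEdges_sup_edge (hG : G.Connected)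
    (hi' : (G.deleteEdges {s(i, j)}).Reachable i i')
    (hj' : ¬ (G.deleteEdges {s(i, j)}).Reachable i j') :
    (G.deleteEdges {s(i, j)} ⊔ edge i' j').Connected := by
  have hle : G.deleteEdges {s(i, j)} ≤ G.deleteEdges {s(i, j)} ⊔ edge i' j' := le_sup_left
  have hjj' := (hG.reachable_deleteEdges_or i j j').resolve_left hj'
  have hne : i' ≠ j' := by rintro rfl; exact hj' hi'
  have hi'j' : (G.deleteEdges {s(i, j)} ⊔ edge i' j').Reachable i' j' :=
    Adj.reachable (Or.inr ((edge_adj i' j' i' j').mpr ⟨.inl ⟨rfl, rfl⟩, hne⟩))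
  refine (connected_iff_exists_forall_reachable _).mpr ⟨i, fun x => ?_⟩
  rcases hG.reachable_deleteEdges_or i j x with hx | hx
  · exact hx.mono hle
  · exact (hi'.mono hle).trans (hi'j'.trans ((hjj'.symm.trans hx).mono hle))

lemma IsTree.deleteEdges_sup_edge [Finite V] (hG : G.IsTree) (hij : G.Adj i j)
    (hi' : (G.deleteEdges {s(i, j)}).Reachable i i')
    (hj' : ¬ (G.deleteEdges {s(i, j)}).Reachable i j') (hnew : ¬ G.Adj i' j') :
    (G.deleteEdges {s(i, j)} ⊔ edge i' j').IsTree := by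
  have hne : i' ≠ j' := by rintro rfl; exact hj' hi'
  have hnot : s(i', j') ∉ G.edgeSet \ {s(i, j)} := fun h => hnew h.1
  rw [isTree_iff_connected_and_card, edgeSet_deleteEdges_sup_edge hne]
  refine ⟨hG.connected.deleteEdges_sup_edge hi' hj', ?_⟩
  rw [← (isTree_iff_connected_and_card.mp hG).2, Nat.card_coe_set_eq, Nat.card_coe_set_eq,
    Set.ncard_insert_of_notMem hnot, Set.ncard_sdiff_singleton_add_one (G.mem_edgeSet.mpr hij)]

variable [Fintype V]

lemma Connected.exists_adj_mem_notMem (hG : G.Connected) {H : Finset V} (hne : H.Nonempty)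
    (hH : H ≠ Finset.univ) : ∃ u v, G.Adj u v ∧ u ∈ H ∧ v ∉ H := by
  obtain ⟨a, ha⟩ := hne
  obtain ⟨b, hb⟩ : ∃ b, b ∉ H := by simpa [Finset.eq_univ_iff_forall] using hH
  obtain ⟨d, -, hd, hd'⟩ := (hG a b).some.exists_boundary_dart H ha hb
  exact ⟨d.fst, d.snd, d.adj, hd, hd'⟩

variable (w : V → V → ℝ) (hsymm : ∀ i j, w i j = w j i)

lemma treeWeight_eq_sum {s : Finset (Sym2 V)} (hs : ∀ e, e ∈ s ↔ e ∈ G.edgeSet) :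
    treeWeight w hsymm G = ∑ e ∈ s, Sym2.lift ⟨w, hsymm⟩ e :=
  Finset.sum_congr (Finset.ext fun e => by rw [mem_edgeFinset, hs]) fun _ _ => rfl

lemma treeWeight_deleteEdges_sup_edge (hij : G.Adj i j) (hnew : ¬ G.Adj i' j')
    (hne : i' ≠ j') :
    treeWeight w hsymm (G.deleteEdges {s(i, j)} ⊔ edge i' j') =
      treeWeight w hsymm G - w i j + w i' j' := by
  have hnot : s(i', j') ∉ G.edgeFinset.erase s(i, j) := fun h =>
    hnew (mem_edgeFinset.mp (Finset.mem_of_mem_erase h))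
  rw [treeWeight_eq_sum (s := insert s(i', j') (G.edgeFinset.erase s(i, j))),
    treeWeight_eq_sum (s := G.edgeFinset), Finset.sum_insert hnot,
    Finset.sum_erase_eq_sub (by simpa using hij), Sym2.lift_mk, Sym2.lift_mk]
  · ring
  · simp
  · simp [edgeSet_deleteEdges_sup_edge hne, and_comm]

variable {w hsymm}

lemma IsTree.weight_le_of_not_reachable_deleteEdges (hG : G.IsTree)
    (hmax : ∀ T : SimpleGraph V, T.IsTree → treeWeight w hsymm T ≤ treeWeight w hsymm G)
    (hij : G.Adj i j) (hi' : (G.deleteEdges {s(i, j)}).Reachable i i')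
    (hj' : ¬ (G.deleteEdges {s(i, j)}).Reachable i j') :
    w i' j' ≤ w i j := by
  by_cases hadj : G.Adj i' j'
  · have he : s(i', j') = s(i, j) := by
      by_contra he
      exact hj' (hi'.trans (Adj.reachable (by simp [hadj, he])))
    rcases Sym2.eq_iff.mp he with ⟨rfl, rfl⟩ | ⟨rfl, rfl⟩
    · exact le_rfl
    · exact (hsymm _ _).le
  · have hne : i' ≠ j' := by rintro rfl; exact hj' hi'
    have := hmax _ (hG.deleteEdges_sup_edge hij hi' hj' hadj)
    rw [treeWeight_deleteEdges_sup_edge w hsymm hij hadj hne] at this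
    linarith

lemma IsTree.exists_cutValue_eq_of_adj (hG : G.IsTree)
    (hmax : ∀ T : SimpleGraph V, T.IsTree → treeWeight w hsymm T ≤ treeWeight w hsymm G)
    (hij : G.Adj i j) :
    ∃ H : Finset V, H.Nonempty ∧ H ≠ Finset.univ ∧
      (∀ x : V, x ∈ H ↔ (G.deleteEdges {s(i, j)}).Reachable i x) ∧
      cutValue w H = w i j := by
  set H := Finset.univ.filter ((G.deleteEdges {s(i, j)}).Reachable i)
  have hmem : ∀ x, x ∈ H ↔ (G.deleteEdges {s(i, j)}).Reachable i x := by simp [H]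
  have hi : i ∈ H := (hmem i).mpr .rfl
  have hj : j ∉ H := by
    rw [hmem]
    exact isAcyclic_iff_forall_adj_isBridge.mp hG.isAcyclic hij
  refine ⟨H, ⟨i, hi⟩, fun h => hj (h ▸ Finset.mem_univ j), hmem,
    cutValue_eq_of_forall_le w hi hj fun i' hi' j' hj' => ?_⟩
  exact hG.weight_le_of_not_reachable_deleteEdges hmax hij ((hmem i').mp hi')
    (mt (hmem j').mpr hj')

end SimpleGraph

theorem maxST_minimax_cut_general {V : Type*} [Fintype V]
    (w : V → V → ℝ) (hsymm : ∀ i j, w i j = w j i)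
    (T : SimpleGraph V) (hT : T.IsTree)
    (hmax : ∀ T' : SimpleGraph V, T'.IsTree →
      treeWeight w hsymm T' ≤ treeWeight w hsymm T)
    (α : ℝ) (hα : IsLeast {x : ℝ | ∃ i j : V, T.Adj i j ∧ x = w i j} α) :
    IsLeast {x : ℝ | ∃ H : Finset V, H.Nonempty ∧ H ≠ Finset.univ ∧
        x = cutValue w H} α ∧
    ∀ i j : V, T.Adj i j → w i j = α →
      ∃ H : Finset V, H.Nonempty ∧ H ≠ Finset.univ ∧
        (∀ x : V, x ∈ H ↔ (T.deleteEdges {s(i, j)}).Reachable i x) ∧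
        cutValue w H = α := by
  refine ⟨⟨?_, ?_⟩, fun i j hij hw => hw ▸ hT.exists_cutValue_eq_of_adj hmax hij⟩
  · obtain ⟨i, j, hij, rfl⟩ := hα.1
    obtain ⟨H, hne, hH, -, hcut⟩ := hT.exists_cutValue_eq_of_adj hmax hij
    exact ⟨H, hne, hH, hcut.symm⟩
  · rintro _ ⟨H, hne, hH, rfl⟩
    obtain ⟨u, v, huv, hu, hv⟩ := hT.connected.exists_adj_mem_notMem hne hH
    exact (hα.2 ⟨u, v, huv, rfl⟩).trans (le_cutValue w hu hv)

/-- **Maximum-spanning-tree characterization of the minimax cut.** Let `w` be a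
symmetric nonnegative edge weight on a finite vertex set `V` with `|V| ≥ 2`, let
`T` be a spanning tree (a tree on all of `V`) of maximal total weight, and let
`α` be the minimum weight of an edge of `T`.  Then the minimax cut value
`φ* = min_{∅ ≠ H ⊊ V} φ(H)` equals `α`, and deleting from `T` any edge
`{i,j}` of weight `α` splits `V` into two parts `H` (the component of `i`) and
`V \ H` with `φ(H) = α`. -/
theorem maxST_minimax_cut {V : Type*} [Fintype V] [DecidableEq V]
    (hV : 2 ≤ Fintype.card V)
    (w : V → V → ℝ) (hsymm : ∀ i j, w i j = w j i) (hnonneg : ∀ i j, 0 ≤ w i j)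
    (T : SimpleGraph V) (hT : T.IsTree)
    (hmax : ∀ T' : SimpleGraph V, T'.IsTree →
      treeWeight w hsymm T' ≤ treeWeight w hsymm T)
    (α : ℝ) (hα : IsLeast {x : ℝ | ∃ i j : V, T.Adj i j ∧ x = w i j} α) :
    IsLeast {x : ℝ | ∃ H : Finset V, H.Nonempty ∧ H ≠ Finset.univ ∧
        x = cutValue w H} α ∧
    ∀ i j : V, T.Adj i j → w i j = α →
      ∃ H : Finset V, H.Nonempty ∧ H ≠ Finset.univ ∧
        (∀ x : V, x ∈ H ↔ (T.deleteEdges {s(i, j)}).Reachable i x) ∧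
        cutValue w H = α :=
  maxST_minimax_cut_general w hsymm T hT hmax α hα
end

section
/- Almost-sure limit of the softmax tail mass under an i.i.d. Gaussian score model: let s_1, s_2, ... be i.i.d. random variables with s_i ~ N(μ, σ²), σ > 0, and fix t ∈ ℝ. Define τ_n(t) = ( Σ_{i=1}^{n} e^{s_i} 1_{s_i > t} ) / ( Σ_{i=1}^{n} e^{s_i} ). Then τ_n(t) converges almost surely, as n → ∞, to Φ_c( (t − μ − σ²)/σ ), where Φ_c(x) = 1 − Φ(x) is the standard normal survival function. -/
/-!
Write `ν = N(μ, σ²)`. By the strong law of large numbers applied separately to the numerator and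
the denominator (both divided by `n`), `τ_n(t)` converges almost surely to
`E[e^s 1_{s > t}] / E[e^s]`, which is the mass of `(t, ∞)` under the exponential tilt of `ν`.
Completing the square in the Gaussian density shows that this tilt is `N(μ + σ², σ²)`, and
standardizing gives its tail at `t` as `Φ_c((t - μ - σ²)/σ)`.
-/

open MeasureTheory ProbabilityTheory Filter Topology Real
open scoped NNReal ENNReal

lemma tendsto_div_of_tendsto_div_natCast {u w : ℕ → ℝ} {a b : ℝ}
    (hu : Tendsto (fun n ↦ u n / n) atTop (𝓝 a)) (hw : Tendsto (fun n ↦ w n / n) atTop (𝓝 b))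
    (hb : b ≠ 0) : Tendsto (fun n ↦ u n / w n) atTop (𝓝 (a / b)) := by
  refine (hu.div hw hb).congr' ?_
  filter_upwards [eventually_ne_atTop 0] with n hn
  exact div_div_div_cancel_right₀ (Nat.cast_ne_zero.2 hn) _ _

section StrongLaw

variable {Ω E : Type*} {mΩ : MeasurableSpace Ω} [MeasurableSpace E] {P : Measure Ω}
  {ν : Measure E} {s : ℕ → Ω → E}

theorem strong_law_ae_comp (hindep : Pairwise fun i j ↦ IndepFun (s i) (s j) P)
    (hlaw : ∀ i, P.map (s i) = ν) (hν : ν ≠ 0) {f : E → ℝ} (hf : Measurable f)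
    (hfi : Integrable f ν) :
    ∀ᵐ ω ∂P, Tendsto (fun n : ℕ ↦ (∑ i ∈ Finset.range n, f (s i ω)) / n) atTop
      (𝓝 (∫ x, f x ∂ν)) := by
  have hmeas : ∀ i, AEMeasurable (s i) P := fun i ↦ .of_map_ne_zero (by rwa [hlaw])
  have hident : ∀ i, IdentDistrib (s i) (s 0) P P :=
    fun i ↦ ⟨hmeas i, hmeas 0, by rw [hlaw, hlaw]⟩
  have hmean : P[f ∘ s 0] = ∫ x, f x ∂ν := by
    rw [← hlaw 0, integral_map (hmeas 0) hf.aestronglyMeasurable]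
    rfl
  rw [← hmean]
  exact strong_law_ae_real (fun i ↦ f ∘ s i)
    ((integrable_map_measure hf.aestronglyMeasurable (hmeas 0)).1 (by rwa [hlaw]))
    (fun i j hij ↦ (hindep hij).comp hf hf) (fun i ↦ (hident i).comp hf)

theorem strong_law_ae_div (hindep : Pairwise fun i j ↦ IndepFun (s i) (s j) P)
    (hlaw : ∀ i, P.map (s i) = ν) {f g : E → ℝ} (hf : Measurable f) (hg : Measurable g)
    (hfi : Integrable f ν) (hgi : Integrable g ν) (hg0 : ∫ x, g x ∂ν ≠ 0) :
    ∀ᵐ ω ∂P, Tendsto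
      (fun n ↦ (∑ i ∈ Finset.range n, f (s i ω)) / ∑ i ∈ Finset.range n, g (s i ω)) atTop
      (𝓝 ((∫ x, f x ∂ν) / ∫ x, g x ∂ν)) := by
  have hν : ν ≠ 0 := by
    rintro rfl
    simp at hg0
  filter_upwards [strong_law_ae_comp hindep hlaw hν hf hfi,
    strong_law_ae_comp hindep hlaw hν hg hgi] with ω hfω hgω
  exact tendsto_div_of_tendsto_div_natCast hfω hgω hg0

end StrongLaw

lemma toReal_tilted_apply {α : Type*} {mα : MeasurableSpace α} (μ : Measure α) [SFinite μ]
    (f : α → ℝ) (s : Set α) :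
    (μ.tilted f s).toReal = (∫ x in s, exp (f x) ∂μ) / ∫ x, exp (f x) ∂μ := by
  rw [tilted_apply_eq_ofReal_integral, integral_div, ENNReal.toReal_ofReal (by positivity)]

lemma gaussianPDFReal_mul_exp (μ : ℝ) (v : ℝ≥0) (x : ℝ) :
    gaussianPDFReal μ v x * exp x = exp (μ + v / 2) * gaussianPDFReal (μ + v) v x := by
  rcases eq_or_ne v 0 with rfl | hv
  · simp [gaussianPDFReal_zero_var]
  simp only [gaussianPDFReal_def, mul_comm (exp (μ + v / 2)), mul_assoc, ← exp_add]
  congr 2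
  have : (v : ℝ) ≠ 0 := by exact_mod_cast hv
  field_simp
  ring

lemma tilted_id_gaussianReal (μ : ℝ) (v : ℝ≥0) :
    (gaussianReal μ v).tilted (fun x ↦ x) = gaussianReal (μ + v) v := by
  rcases eq_or_ne v 0 with rfl | hv
  · simpa [gaussianReal_zero_var] using
      (tilted_congr (ae_eq_dirac fun x : ℝ ↦ x)).trans (tilted_const (Measure.dirac μ) μ)
  have hZ : ∫ x, exp x ∂gaussianReal μ v = exp (μ + v / 2) := by
    simpa [mgf] using congrFun (mgf_fun_id_gaussianReal (μ := μ) (v := v)) 1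
  rw [Measure.tilted, hZ, gaussianReal_of_var_ne_zero _ hv, gaussianReal_of_var_ne_zero _ hv,
    ← withDensity_mul _ (measurable_gaussianPDF _ _) (by fun_prop)]
  congr with x
  rw [Pi.mul_apply, gaussianPDF, gaussianPDF, ← ENNReal.ofReal_mul (gaussianPDFReal_nonneg _ _ _),
    ← mul_div_assoc, gaussianPDFReal_mul_exp, mul_div_cancel_left₀ _ (exp_pos _).ne']

lemma gaussianReal_Ioi_eq_one_sub (m : ℝ) {v : ℝ≥0} (hv : v ≠ 0) (t : ℝ) :
    (gaussianReal m v (Set.Ioi t)).toReal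
      = 1 - (gaussianReal 0 1 (Set.Iic ((t - m) / √v))).toReal := by
  have hσ : 0 < √(v : ℝ) := sqrt_pos.2 (by positivity)
  have hstd : (gaussianReal m v).map (fun x ↦ (x - m) / √v) = gaussianReal 0 1 := by
    rw [show (fun x ↦ (x - m) / √v) = (· / √v) ∘ (· - m) from rfl,
      ← Measure.map_map (by fun_prop) (by fun_prop), gaussianReal_map_sub_const,
      gaussianReal_map_div_const, sub_self, zero_div]
    congr
    ext
    simp [hv]
  have hpre : (fun x ↦ (x - m) / √v) ⁻¹' Set.Ioi ((t - m) / √v) = Set.Ioi t := by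
    ext x
    simp [div_lt_div_iff_of_pos_right hσ]
  rw [← hpre, ← Measure.map_apply (by fun_prop) measurableSet_Ioi, hstd, ← Set.compl_Iic,
    prob_compl_eq_one_sub measurableSet_Iic,
    ENNReal.toReal_sub_of_le prob_le_one ENNReal.one_ne_top, ENNReal.toReal_one]

theorem softmax_tail_mass_tendsto_gaussian_general
    {Ω : Type*} [MeasureSpace Ω]
    (μ σ : ℝ) (hσ : 0 < σ) (t : ℝ)
    (s : ℕ → Ω → ℝ)
    (hindep : iIndepFun s ℙ)
    (hdist : ∀ i, Measure.map (s i) ℙ = gaussianReal μ ⟨σ ^ 2, sq_nonneg σ⟩) :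
    ∀ᵐ ω ∂ℙ, Tendsto
      (fun n : ℕ =>
        (∑ i ∈ Finset.range n, if t < s i ω then Real.exp (s i ω) else 0) /
          (∑ i ∈ Finset.range n, Real.exp (s i ω)))
      atTop
      (nhds (1 - ((gaussianReal 0 1) (Set.Iic ((t - μ - σ ^ 2) / σ))).toReal)) := by
  set v : ℝ≥0 := ⟨σ ^ 2, sq_nonneg σ⟩
  have hv : v ≠ 0 := fun h ↦ (pow_pos hσ 2).ne' (congrArg NNReal.toReal h)
  have hexp : Integrable exp (gaussianReal μ v) := by
    simpa using integrable_exp_mul_gaussianReal (μ := μ) (v := v) 1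
  have hlim := strong_law_ae_div (fun i j hij ↦ hindep.indepFun hij) hdist
    (f := (Set.Ioi t).indicator exp) (measurable_exp.indicator measurableSet_Ioi) measurable_exp
    (hexp.indicator measurableSet_Ioi) hexp (integral_exp_pos hexp).ne'
  have htilt := toReal_tilted_apply (gaussianReal μ v) (fun x ↦ x) (Set.Ioi t)
  rw [tilted_id_gaussianReal, gaussianReal_Ioi_eq_one_sub _ hv,
    ← integral_indicator measurableSet_Ioi, show (v : ℝ) = σ ^ 2 from rfl, sqrt_sq hσ.le,
    ← sub_sub] at htilt
  rw [htilt]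
  -- `(Set.Ioi t).indicator exp x` unfolds to `if t < x then exp x else 0`
  exact hlim

/-- **Almost-sure limit of the softmax tail mass under an i.i.d. Gaussian score
model.** Let `s 0, s 1, ...` be i.i.d. random variables with `s i ~ N(μ, σ²)`,
`σ > 0`, and fix `t ∈ ℝ`.  Define
`τ_n(t) = (∑_{i<n} e^{s i} 1_{s i > t}) / (∑_{i<n} e^{s i})`.  Then `τ_n(t)`
converges almost surely, as `n → ∞`, to `Φ_c((t−μ−σ²)/σ)`, where
`Φ_c(x) = 1 − Φ(x)` and `Φ` is the standard normal CDF (realized here as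
`Φ(x) = (N(0,1))(Iic x)`). -/
theorem softmax_tail_mass_tendsto_gaussian
    {Ω : Type*} [MeasureSpace Ω] [IsProbabilityMeasure (ℙ : Measure Ω)]
    (μ σ : ℝ) (hσ : 0 < σ) (t : ℝ)
    (s : ℕ → Ω → ℝ) (hmeas : ∀ i, Measurable (s i))
    (hindep : iIndepFun s ℙ)
    (hdist : ∀ i, Measure.map (s i) ℙ = gaussianReal μ ⟨σ ^ 2, sq_nonneg σ⟩) :
    ∀ᵐ ω ∂ℙ, Tendsto
      (fun n : ℕ =>
        (∑ i ∈ Finset.range n, if t < s i ω then Real.exp (s i ω) else 0) /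
          (∑ i ∈ Finset.range n, Real.exp (s i ω)))
      atTop
      (nhds (1 - ((gaussianReal 0 1) (Set.Iic ((t - μ - σ ^ 2) / σ))).toReal)) :=
  softmax_tail_mass_tendsto_gaussian_general μ σ hσ t s hindep hdist
end
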